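/- Let $(g,\xi=\mathrm{grad}(f),\lambda,\mu)$ be a gradient $\eta$-Ricci soliton on an $n$-dimensional Riemannian manifold with $\eta = df$. Then $\eta$ is $f$-harmonic (i.e. $\Delta_f(\eta) = 0$ where $\Delta_f = \Delta - \nabla_{\mathrm{grad}(f)}$) if and only if $\mathrm{scal} + (\mu + \tfrac{1}{2})|\xi|^2$ is constant. -/
import Mathlib


open scoped RealInnerProductSpace BigOperators

/-- Tangent-space model: tangent vectors at each point are vectors of a Euclidean space. -/
abbrev Evec (n : ℕ) := EuclideanSpace ℝ (Fin n)

/-- Let `(g, ξ = grad f, λ, μ)` be a gradient `η`-Ricci soliton on an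
`n`-dimensional Riemannian manifold with `η = df`.  Then `η` is `f`-harmonic
(i.e. `Δ_f(η) = 0` where `Δ_f = Δ - ∇_{grad f}`) if and only if
`scal + (μ + ½)|ξ|²` is constant.
Standard facts assumed: the trace identity `Δf + scal + λn + μ|ξ|² = 0`, the commutation
`Δ(dh) = d(Δh)` for the Hodge Laplacian, `∇_{grad f}(df) = ½ d(|grad f|²)` (encoded by the
`1`-form `nabladf`), linearity of `d`, `d` of a constant vanishes, and a function is
constant iff its differential vanishes. -/
theorem gradient_eta_ricci_soliton_f_harmonic_iff {M : Type*} {n : ℕ}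
    (Δform : ((M → Evec n) → (M → ℝ)) → ((M → Evec n) → (M → ℝ)))
    (Δfun : (M → ℝ) → (M → ℝ))
    (d : (M → ℝ) → (M → Evec n) → (M → ℝ))
    (nabladf : (M → Evec n) → (M → ℝ))
    (scal : M → ℝ) (lam mu : ℝ) (f : M → ℝ) (ξ : M → Evec n)
    -- `η = df` is the `g`-dual of `ξ = grad f`
    (hgrad : ∀ (Y : M → Evec n) (p : M), ⟪ξ p, Y p⟫ = d f Y p)
    -- `∇_{grad f}(df) = ½ d(|ξ|²)`
    (hnabla : ∀ (Y : M → Evec n) (p : M),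
      nabladf Y p = (1 / 2) * d (fun q => ⟪ξ q, ξ q⟫) Y p)
    -- the Hodge Laplacian commutes with `d`
    (hΔd : ∀ (h : M → ℝ) (Y : M → Evec n) (p : M), Δform (d h) Y p = d (Δfun h) Y p)
    -- trace of the gradient `η`-Ricci soliton equation
    (htrace : ∀ p : M, Δfun f p + scal p + lam * n + mu * ⟪ξ p, ξ p⟫ = 0)
    (hd_comb : ∀ (a b : ℝ) (h₁ h₂ : M → ℝ),
      d (fun p => a * h₁ p + b * h₂ p) = fun Y p => a * d h₁ Y p + b * d h₂ Y p)
    (hd_const : ∀ c : ℝ, d (fun _ => c) = fun _ _ => 0)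
    (hdconst : ∀ h : M → ℝ, (∀ (Y : M → Evec n) (p : M), d h Y p = 0) ↔ (∀ p q, h p = h q)) :
    (∀ (Y : M → Evec n) (p : M), Δform (d f) Y p - nabladf Y p = 0)
      ↔ (∀ p q : M,
        scal p + (mu + 1 / 2) * ⟪ξ p, ξ p⟫ = scal q + (mu + 1 / 2) * ⟪ξ q, ξ q⟫) := by
  set h : M → ℝ := fun p => scal p + (mu + 1 / 2) * ⟪ξ p, ξ p⟫ with hh
  have hΔf : Δfun f = fun p => (1:ℝ) * ((-1 : ℝ) * h p + (1/2) * ⟪ξ p, ξ p⟫)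
      + (-(lam * n)) * (fun _ : M => (1:ℝ)) p := by
    funext p
    have := htrace p
    simp only [hh]
    ring_nf
    linarith
  have hd1 : d (fun p => (-1 : ℝ) * h p + (1/2) * ⟪ξ p, ξ p⟫)
      = fun Y p => (-1 : ℝ) * d h Y p + (1/2) * d (fun q => ⟪ξ q, ξ q⟫) Y p :=
    hd_comb _ _ _ _
  have hd2 : d (Δfun f) = fun Y p => (1:ℝ) * d (fun p => (-1:ℝ) * h p + (1/2) * ⟪ξ p, ξ p⟫) Y p
      + (-(lam * n)) * d (fun _ : M => (1:ℝ)) Y p := by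
    rw [hΔf]; exact hd_comb _ _ _ _
  have key : ∀ (Y : M → Evec n) (p : M),
      Δform (d f) Y p - nabladf Y p = -(d h Y p) := by
    intro Y p
    rw [hΔd, hnabla, hd2]
    simp only [hd1, hd_const]
    ring
  constructor
  · intro H p q
    have hz : ∀ (Y : M → Evec n) (p : M), d h Y p = 0 := by
      intro Y p
      have k := key Y p
      have h2 := H Y p
      linarith
    exact (hdconst h).mp hz p q
  · intro H Y p
    have hz := (hdconst h).mpr H Y p
    have k := key Y p
    linarith
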